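/- arXiv:1709.06584 — 4 statements merged into one kernel-verified Lean document; each statement's English description precedes it below -/
import Mathlib

section
/- Let p : ℤ → ℝ satisfy p(k) ≥ 0 for all k and p(k) = 0 for |k| > R, where R > 1 is an integer. If ν̄ is an invariant probability measure for the generator L of the ASEP on ℤ with a blockage at the origin, then the mean current is constant away from the blockage: ⟨ν̄, C_{x,x+1}⟩ = ⟨ν̄, C_{-1,1}⟩ for every integer x with x ≠ -1 and x ≠ 0. -/
open MeasureTheory Filter
open scoped NNReal

/-- A configuration of the exclusion process: for each site `x : ℤ`,
whether the site is occupied. -/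
abbrev Config : Type := ℤ → Bool

/-- The occupation number `η(x) ∈ {0,1}` as a real number. -/
noncomputable def val (η : Config) (x : ℤ) : ℝ := if η x then 1 else 0

/-- The configuration `η^{x,y}` obtained from `η` by exchanging the values
at sites `x` and `y`. -/
def swapConf (η : Config) (x y : ℤ) : Config := fun z =>
  if z = x then η y else if z = y then η x else η z

/-- A local (cylinder) function: it depends on only finitely many coordinates. -/
def IsLocal (f : Config → ℝ) : Prop :=
  ∃ s : Finset ℤ, ∀ η ζ : Config, (∀ x ∈ s, η x = ζ x) → f η = f ζ

/-- The generator of the ASEP on `ℤ` with a blockage at the origin: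
`L f (η) = Σ_{x,y ≠ 0} p (y-x) η(x) (1-η(y)) (f(η^{x,y}) - f(η))`. -/
noncomputable def gen (p : ℤ → ℝ) (f : Config → ℝ) (η : Config) : ℝ :=
  ∑' q : ℤ × ℤ,
    if q.1 ≠ 0 ∧ q.2 ≠ 0 then
      p (q.2 - q.1) * val η q.1 * (1 - val η q.2) * (f (swapConf η q.1 q.2) - f η)
    else 0

/-- The current across the bond `(i,j)`:
`C_{i,j}(η) = Σ_{x ≤ i, y ≥ j, x ≠ 0, y ≠ 0}
  [p(y-x) η(x)(1-η(y)) - p(x-y) η(y)(1-η(x))]`. -/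
noncomputable def current (p : ℤ → ℝ) (i j : ℤ) (η : Config) : ℝ :=
  ∑' q : ℤ × ℤ,
    if q.1 ≤ i ∧ j ≤ q.2 ∧ q.1 ≠ 0 ∧ q.2 ≠ 0 then
      p (q.2 - q.1) * val η q.1 * (1 - val η q.2)
        - p (q.1 - q.2) * val η q.2 * (1 - val η q.1)
    else 0

/-- A measure `ν` is invariant for the generator `L` if `∫ L f dν = 0`
for every local function `f`. -/
def IsInvariantMeasure (p : ℤ → ℝ) (ν : Measure Config) : Prop :=
  ∀ f : Config → ℝ, IsLocal f → ∫ η, gen p f η ∂ν = 0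

/-!
Testing invariance against the occupation variable `η ↦ η(i)` gives the conservation law
`L η(i) = C_{i-1,i} - C_{i,i+1}`: the only jumps that change `η(i)` go into or out of `i`,
and the net rate of those is what crosses the bond `(i-1,i)` minus what crosses `(i,i+1)`;
this is seen by pairing each ordered pair of sites with its swap. Integrating against `ν̄`,
all mean currents `⟨ν̄, C_{i,i+1}⟩` coincide, the blockage included. Finally
`C_{0,1} = C_{-1,1}`, as no jump starts or ends at the origin. Integrability is automatic:
local functions are bounded and measurable.
-/

noncomputable def jumpRate (p : ℤ → ℝ) (η : Config) (x y : ℤ) : ℝ :=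
  if x ≠ 0 ∧ y ≠ 0 then p (y - x) * val η x * (1 - val η y) else 0

noncomputable def crossesBond (i j : ℤ) (q : ℤ × ℤ) : ℝ :=
  if q.1 ≤ i ∧ j ≤ q.2 then 1 else 0

lemma Finset.sum_mul_sub_swap {α M : Type*} [NonUnitalNonAssocRing M] {s : Finset (α × α)}
    (hs : ∀ q, q ∈ s ↔ q.swap ∈ s) (c : α × α → M) (G : α → α → M) :
    ∑ q ∈ s, c q * (G q.1 q.2 - G q.2 q.1) = ∑ q ∈ s, (c q - c q.swap) * G q.1 q.2 := by
  have hswap : ∑ q ∈ s, c q * G q.2 q.1 = ∑ q ∈ s, c q.swap * G q.1 q.2 :=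
    Finset.sum_equiv (Equiv.prodComm α α) hs fun q _ => by simp
  simp only [mul_sub, sub_mul, Finset.sum_sub_distrib, hswap]

section

variable {R : ℤ} {p : ℤ → ℝ}

lemma jumpRate_eq_zero (hrange : ∀ k : ℤ, R < |k| → p k = 0)
    (η : Config) {x y : ℤ} (h : R < |y - x|) : jumpRate p η x y = 0 := by
  simp [jumpRate, hrange _ h]

lemma jumpRate_mul_val_swapConf_sub (η : Config) (x y i : ℤ) :
    jumpRate p η x y * (val (swapConf η x y) i - val η i) =
      ((if y = i then 1 else 0) - (if x = i then 1 else 0)) * jumpRate p η x y := by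
  by_cases hx : x = i <;> by_cases hy : y = i <;> subst_vars <;>
    simp only [jumpRate, val, swapConf] <;> split_ifs <;> simp_all

lemma current_eq_sum (hrange : ∀ k : ℤ, R < |k| → p k = 0)
    {i j : ℤ} {B : Finset (ℤ × ℤ)}
    (hB : ∀ q : ℤ × ℤ, q.1 ≤ i → j ≤ q.2 → |q.2 - q.1| ≤ R → q ∈ B) (η : Config) :
    current p i j η =
      ∑ q ∈ B, crossesBond i j q * (jumpRate p η q.1 q.2 - jumpRate p η q.2 q.1) := by
  have hsummand : ∀ q : ℤ × ℤ,
      (if q.1 ≤ i ∧ j ≤ q.2 ∧ q.1 ≠ 0 ∧ q.2 ≠ 0 then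
        p (q.2 - q.1) * val η q.1 * (1 - val η q.2)
          - p (q.1 - q.2) * val η q.2 * (1 - val η q.1)
      else 0) = crossesBond i j q * (jumpRate p η q.1 q.2 - jumpRate p η q.2 q.1) := by
    intro q
    unfold crossesBond jumpRate
    split_ifs <;> simp_all
  simp only [current, hsummand]
  refine tsum_eq_sum fun q hq => ?_
  by_cases hcross : q.1 ≤ i ∧ j ≤ q.2
  · have hfar : R < |q.2 - q.1| := not_le.mp fun h => hq (hB q hcross.1 hcross.2 h)
    rw [jumpRate_eq_zero hrange η hfar, jumpRate_eq_zero hrange η (by rwa [abs_sub_comm]),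
      sub_self, mul_zero]
  · simp [crossesBond, hcross]

lemma gen_val_eq_sum (hrange : ∀ k : ℤ, R < |k| → p k = 0)
    {i : ℤ} {B : Finset (ℤ × ℤ)}
    (hB : ∀ q : ℤ × ℤ, (q.1 = i ∨ q.2 = i) → |q.2 - q.1| ≤ R → q ∈ B) (η : Config) :
    gen p (fun ζ => val ζ i) η =
      ∑ q ∈ B, ((if q.2 = i then 1 else 0) - (if q.1 = i then 1 else 0)) *
        jumpRate p η q.1 q.2 := by
  have hsummand : ∀ q : ℤ × ℤ,
      (if q.1 ≠ 0 ∧ q.2 ≠ 0 then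
        p (q.2 - q.1) * val η q.1 * (1 - val η q.2) *
          (val (swapConf η q.1 q.2) i - val η i)
      else 0) = ((if q.2 = i then 1 else 0) - (if q.1 = i then 1 else 0)) *
        jumpRate p η q.1 q.2 := by
    intro q
    rw [← jumpRate_mul_val_swapConf_sub, jumpRate]
    split_ifs <;> simp
  simp only [gen, hsummand]
  refine tsum_eq_sum fun q hq => ?_
  by_cases hsite : q.1 = i ∨ q.2 = i
  · rw [jumpRate_eq_zero hrange η (not_le.mp fun h => hq (hB q hsite h)), mul_zero]
  · simp [not_or.mp hsite]

lemma crossesBond_sub_swap (i : ℤ) (q : ℤ × ℤ) :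
    (crossesBond i (i + 1) q - crossesBond (i + 1) (i + 1 + 1) q) -
        (crossesBond i (i + 1) q.swap - crossesBond (i + 1) (i + 1 + 1) q.swap) =
      (if q.2 = i + 1 then 1 else 0) - (if q.1 = i + 1 then 1 else 0) := by
  simp only [crossesBond, Prod.fst_swap, Prod.snd_swap]
  split_ifs <;> first | omega | norm_num

lemma gen_val_succ_eq_current_sub (hrange : ∀ k : ℤ, R < |k| → p k = 0) (i : ℤ) (η : Config) :
    gen p (fun ζ => val ζ (i + 1)) η =
      current p i (i + 1) η - current p (i + 1) (i + 1 + 1) η := by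
  set B := Finset.Icc (i + 1 - R) (i + 1 + R) ×ˢ Finset.Icc (i + 1 - R) (i + 1 + R)
  have hmem : ∀ q : ℤ × ℤ, |q.2 - q.1| ≤ R →
      (q.1 = i + 1 ∨ q.2 = i + 1 ∨ (q.1 ≤ i + 1 ∧ i + 1 ≤ q.2)) → q ∈ B := by
    intro q hband hnear
    have := abs_le.mp hband
    simp only [B, Finset.mem_product, Finset.mem_Icc]
    omega
  have hswap : ∀ q, q ∈ B ↔ q.swap ∈ B := by
    simp only [B, Finset.mem_product, Finset.mem_Icc, Prod.fst_swap, Prod.snd_swap]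
    tauto
  rw [gen_val_eq_sum hrange (fun q hq hband => hmem q hband (by omega)),
    current_eq_sum hrange (fun q h1 h2 hband => hmem q hband (by omega)),
    current_eq_sum hrange (fun q h1 h2 hband => hmem q hband (by omega)),
    ← Finset.sum_sub_distrib]
  simp only [← sub_mul]
  rw [Finset.sum_mul_sub_swap hswap
    (fun q => crossesBond i (i + 1) q - crossesBond (i + 1) (i + 1 + 1) q)
    (jumpRate p η)]
  exact Finset.sum_congr rfl fun q _ => by rw [crossesBond_sub_swap]

lemma IsLocal.integrable {f : Config → ℝ} (hf : IsLocal f) (ν : Measure Config)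
    [IsFiniteMeasure ν] : Integrable f ν := by
  obtain ⟨s, hs⟩ := hf
  let restrict : Config → (s → Bool) := fun η x => η x
  let extend : (s → Bool) → Config := fun r x => if h : x ∈ s then r ⟨x, h⟩ else false
  have hfactor : f = (f ∘ extend) ∘ restrict :=
    funext fun η => hs _ _ fun x hx => by simp [extend, restrict, hx]
  rw [hfactor]
  exact Integrable.of_finite.comp_measurable
    (measurable_pi_lambda _ fun x => measurable_pi_apply _)

lemma isLocal_val (i : ℤ) : IsLocal fun η => val η i :=
  ⟨{i}, fun η ζ h => by simp [val, h i (Finset.mem_singleton_self i)]⟩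

lemma isLocal_current (hrange : ∀ k : ℤ, R < |k| → p k = 0) (i j : ℤ) :
    IsLocal (current p i j) := by
  refine ⟨Finset.Icc (j - R) (i + R), fun η ζ h => tsum_congr fun q => ?_⟩
  split_ifs with hcross
  · rcases le_or_gt |q.2 - q.1| R with hband | hfar
    · have := abs_le.mp hband
      simp only [val, h q.1 (Finset.mem_Icc.mpr (by omega)),
        h q.2 (Finset.mem_Icc.mpr (by omega))]
    · rw [hrange _ hfar, hrange _ (by rwa [abs_sub_comm])]
      ring
  · rfl

lemma current_zero_one : current p 0 1 = current p (-1) 1 :=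
  funext fun η => tsum_congr fun q => if_congr (by omega) rfl rfl

lemma integral_current_succ_eq (hrange : ∀ k : ℤ, R < |k| → p k = 0)
    {ν : Measure Config} [IsFiniteMeasure ν] (hinv : IsInvariantMeasure p ν) (i : ℤ) :
    ∫ η, current p (i + 1) (i + 1 + 1) η ∂ν = ∫ η, current p i (i + 1) η ∂ν := by
  have h := hinv _ (isLocal_val (i + 1))
  simp only [gen_val_succ_eq_current_sub hrange] at h
  rw [integral_sub ((isLocal_current hrange _ _).integrable ν)
    ((isLocal_current hrange _ _).integrable ν), sub_eq_zero] at h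
  exact h.symm

end

theorem constant_current_for_invariant_measure_general
    (R : ℤ) (p : ℤ → ℝ)
    (hrange : ∀ k : ℤ, R < |k| → p k = 0)
    (ν : Measure Config) (hν : IsProbabilityMeasure ν)
    (hinv : IsInvariantMeasure p ν) :
    ∀ x : ℤ, x ≠ -1 → x ≠ 0 →
      ∫ η, current p x (x + 1) η ∂ν = ∫ η, current p (-1) 1 η ∂ν := by
  have hstep := integral_current_succ_eq hrange hinv
  have hconst : ∀ n : ℤ, ∫ η, current p n (n + 1) η ∂ν = ∫ η, current p 0 1 η ∂ν := by
    intro n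
    induction n using Int.induction_on with
    | zero => rfl
    | succ k ih => rw [hstep, ih]
    | pred k ih => rw [← ih, ← hstep, sub_add_cancel]
  intro x _ _
  rw [hconst x, current_zero_one]

/-- For an invariant measure of the ASEP with a blockage at the origin,
the mean current across each bond `(x, x+1)` away from the blockage equals
the mean current across the bond `(-1, 1)`. -/
theorem constant_current_for_invariant_measure
    (R : ℤ) (hR : 1 < R) (p : ℤ → ℝ) (hp : ∀ k, 0 ≤ p k)
    (hrange : ∀ k : ℤ, R < |k| → p k = 0)
    (ν : Measure Config) (hν : IsProbabilityMeasure ν)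
    (hinv : IsInvariantMeasure p ν) :
    ∀ x : ℤ, x ≠ -1 → x ≠ 0 →
      ∫ η, current p x (x + 1) η ∂ν = ∫ η, current p (-1) 1 η ∂ν :=
  constant_current_for_invariant_measure_general R p hrange ν hν hinv
end

section
/- Let p : ℤ → ℝ satisfy p(k) ≥ 0 for all k and p(k) = 0 for |k| > R, where R > 1 is an integer. Let ν̄ be an invariant probability measure for the generator L of the ASEP on ℤ with a blockage at the origin, and let ν* be a Cesàro weak limit of ν̄ under translation, i.e. ν* = lim_{k→∞} (1/n_k) Σ_{i=1}^{n_k} τ_i ν̄ in the topology of weak convergence of probability measures, for some sequence of integers n_k → ∞. Then: (1) ν* is translation invariant, i.e. τ_1 ν* = ν*; and (2) ν* is invariant for the translation-invariant ASEP generator L_0, i.e. ∫ L_0 f dν* = 0 for every local function f. -/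
open MeasureTheory Filter
open scoped NNReal

/-- The translation `τ_i` on configurations: `(τ_i η)(j) = η (j + i)`. -/
def transl (i : ℤ) (η : Config) : Config := fun j => η (j + i)

/-- The translation `τ_i` on measures (pushforward). -/
noncomputable def translMeasure (i : ℤ) (ν : Measure Config) : Measure Config :=
  Measure.map (transl i) ν

/-- `ν'` is a Cesàro weak limit of `ν` under translation: for some sequence
`n_k → ∞`, the probability measures `(1/n_k) Σ_{i=1}^{n_k} τ_i ν` converge weakly
to `ν'`, i.e. the integrals of every (bounded) continuous function converge.  -/
def IsCesaroLimit (ν ν' : Measure Config) : Prop :=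
  ∃ n : ℕ → ℕ, Tendsto n atTop atTop ∧
    ∀ f : Config → ℝ, Continuous f →
      Tendsto (fun k => (n k : ℝ)⁻¹ * ∑ i ∈ Finset.Icc 1 (n k),
          ∫ η, f η ∂(translMeasure (i : ℤ) ν)) atTop
        (nhds (∫ η, f η ∂ν'))

/-- The generator of the translation-invariant ASEP (no blockage):
`L₀ f (η) = Σ_{x,y} p (y-x) η(x) (1-η(y)) (f(η^{x,y}) - f(η))`. -/
noncomputable def gen0 (p : ℤ → ℝ) (f : Config → ℝ) (η : Config) : ℝ :=
  ∑' q : ℤ × ℤ,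
    p (q.2 - q.1) * val η q.1 * (1 - val η q.2) * (f (swapConf η q.1 q.2) - f η)

/-!
Both claims come from averaging over the translates `τ_i ν̄`, `1 ≤ i ≤ n`. Shifting such an
average by one site changes it by `(τ_{n+1} ν̄ - τ_1 ν̄) / n`, which is `O(1/n)` against a
bounded continuous function, so a Cesàro limit is shift invariant. For a local `f`, `L₀ f` is
local, and once `i` is so large that the blockage lies outside the sites that `(L₀ f) ∘ τ_i`
reads, `(L₀ f) ∘ τ_i = L (f ∘ τ_i)`; hence `∫ L₀ f d(τ_i ν̄) = 0` for all large `i`, and the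
Cesàro averages of these integrals tend to `0`.
-/

open Topology BoundedContinuousFunction Pointwise

lemma isLocal_iff_exists_dependsOn {f : Config → ℝ} :
    IsLocal f ↔ ∃ s : Finset ℤ, DependsOn f (s : Set ℤ) :=
  Iff.rfl

lemma IsLocal.continuous {f : Config → ℝ} (hf : IsLocal f) : Continuous f := by
  obtain ⟨s, hs⟩ := isLocal_iff_exists_dependsOn.1 hf
  obtain ⟨g, rfl⟩ := dependsOn_iff_exists_comp.1 hs
  exact continuous_of_discreteTopology.comp (continuous_pi fun x => continuous_apply _)

lemma continuous_transl (i : ℤ) : Continuous (transl i) :=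
  continuous_pi fun j => continuous_apply (j + i)

lemma measurable_transl (i : ℤ) : Measurable (transl i) :=
  (continuous_transl i).measurable

lemma transl_transl (i j : ℤ) (η : Config) : transl i (transl j η) = transl (i + j) η := by
  funext k
  simp only [transl, add_assoc]

lemma transl_swapConf (i : ℤ) (η : Config) (x y : ℤ) :
    transl i (swapConf η (x + i) (y + i)) = swapConf (transl i η) x y := by
  funext j
  simp only [transl, swapConf, add_left_inj]

lemma DependsOn.comp_transl {f : Config → ℝ} {s : Finset ℤ} (hf : DependsOn f (s : Set ℤ))
    (i : ℤ) : DependsOn (f ∘ transl i) (s.image (· + i) : Set ℤ) :=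
  fun _ _ h => hf fun x hx => h (x + i) (Finset.mem_image_of_mem _ hx)

lemma translMeasure_translMeasure (i j : ℤ) (ν : Measure Config) :
    translMeasure i (translMeasure j ν) = translMeasure (i + j) ν := by
  simp only [translMeasure, Measure.map_map (measurable_transl i) (measurable_transl j)]
  congr 1
  exact funext (transl_transl i j)

instance (i : ℤ) (ν : Measure Config) [IsFiniteMeasure ν] :
    IsFiniteMeasure (translMeasure i ν) := by
  unfold translMeasure; infer_instance

instance (i : ℤ) (ν : Measure Config) [IsProbabilityMeasure ν] :
    IsProbabilityMeasure (translMeasure i ν) :=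
  Measure.isProbabilityMeasure_map (measurable_transl i).aemeasurable

lemma integral_translMeasure (i : ℤ) (ν : Measure Config) {g : Config → ℝ}
    (hg : Continuous g) :
    ∫ η, g η ∂(translMeasure i ν) = ∫ η, g (transl i η) ∂ν :=
  integral_map (measurable_transl i).aemeasurable hg.aestronglyMeasurable

/-- `IsCesaroLimit` unfolds to the convergence of `cesaroMean _ ∘ n`. -/
noncomputable def cesaroMean (a : ℕ → ℝ) (m : ℕ) : ℝ :=
  (m : ℝ)⁻¹ * ∑ i ∈ Finset.Icc 1 m, a i

lemma cesaroMean_eq_range (a : ℕ → ℝ) (m : ℕ) :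
    cesaroMean a m = (m : ℝ)⁻¹ * ∑ i ∈ Finset.range m, a (i + 1) := by
  rw [cesaroMean, Finset.range_eq_Ico, Finset.sum_Ico_add', zero_add]
  rfl

lemma Filter.Tendsto.cesaroMean {a : ℕ → ℝ} {l : ℝ} (h : Tendsto a atTop (𝓝 l)) :
    Tendsto (cesaroMean a) atTop (𝓝 l) := by
  simp_rw [funext (cesaroMean_eq_range a)]
  exact ((tendsto_add_atTop_iff_nat 1).2 h).cesaro

lemma cesaroMean_shift_sub (b : ℕ → ℝ) (m : ℕ) :
    cesaroMean (fun i => b (i + 1)) m - cesaroMean b m = (m : ℝ)⁻¹ * (b (m + 1) - b 1) := by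
  rw [cesaroMean_eq_range, cesaroMean_eq_range, ← mul_sub, ← Finset.sum_sub_distrib,
    Finset.sum_range_sub (fun i => b (i + 1))]

lemma tendsto_cesaroMean_shift_sub {b : ℕ → ℝ} {C : ℝ} (hb : ∀ i, |b i| ≤ C) :
    Tendsto (fun m => cesaroMean (fun i => b (i + 1)) m - cesaroMean b m) atTop (𝓝 0) := by
  simp_rw [cesaroMean_shift_sub]
  refine (tendsto_inv_atTop_zero.comp tendsto_natCast_atTop_atTop).zero_mul_isBoundedUnder_le
    (isBoundedUnder_of ⟨C + C, fun m => ?_⟩)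
  exact (abs_sub _ _).trans (add_le_add (hb _) (hb _))

theorem integral_translMeasure_one_of_isCesaroLimit {ν ν' : Measure Config}
    [IsProbabilityMeasure ν] (hces : IsCesaroLimit ν ν') (f : Config →ᵇ ℝ) :
    ∫ η, f η ∂(translMeasure 1 ν') = ∫ η, f η ∂ν' := by
  obtain ⟨n, hn, hconv⟩ := hces
  have hf1 : Continuous fun η => f (transl 1 η) := f.continuous.comp (continuous_transl 1)
  set b : ℕ → ℝ := fun i => ∫ η, f η ∂(translMeasure i ν)
  have hb : ∀ i, |b i| ≤ ‖f‖ := fun i => f.norm_integral_le_norm _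
  have hshift : ∀ i : ℕ, ∫ η, f (transl 1 η) ∂(translMeasure i ν) = b (i + 1) := by
    intro i
    rw [← integral_translMeasure _ _ f.continuous, translMeasure_translMeasure, add_comm]
    rfl
  have hlim₁ : Tendsto (cesaroMean (fun i => b (i + 1)) ∘ n) atTop
      (𝓝 (∫ η, f η ∂(translMeasure 1 ν'))) := by
    rw [integral_translMeasure _ _ f.continuous]
    have hconv₁ := hconv _ hf1
    simp only [hshift] at hconv₁
    exact hconv₁
  have hlim₂ : Tendsto (cesaroMean b ∘ n) atTop (𝓝 (∫ η, f η ∂ν')) := hconv _ f.continuous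
  exact sub_eq_zero.1 <| tendsto_nhds_unique (hlim₁.sub hlim₂)
    ((tendsto_cesaroMean_shift_sub hb).comp hn)

theorem translMeasure_one_eq_of_isCesaroLimit {ν ν' : Measure Config}
    [IsProbabilityMeasure ν] [IsFiniteMeasure ν'] (hces : IsCesaroLimit ν ν') :
    translMeasure 1 ν' = ν' :=
  ext_of_forall_integral_eq_of_IsFiniteMeasure (integral_translMeasure_one_of_isCesaroLimit hces)

section Generator

variable {p : ℤ → ℝ} {r : ℕ} {f : Config → ℝ} {s : Finset ℤ}

noncomputable def jumpTerm (p : ℤ → ℝ) (f : Config → ℝ) (η : Config) (q : ℤ × ℤ) : ℝ :=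
  p (q.2 - q.1) * val η q.1 * (1 - val η q.2) * (f (swapConf η q.1 q.2) - f η)

noncomputable def thicken (r : ℕ) (s : Finset ℤ) : Finset ℤ := s + Finset.Icc (-(r : ℤ)) r

lemma add_mem_thicken {x d : ℤ} (hx : x ∈ s) (hd : |d| ≤ r) : x + d ∈ thicken r s :=
  Finset.add_mem_add hx (Finset.mem_Icc.2 (abs_le.1 hd))

lemma subset_thicken : s ⊆ thicken r s := fun x hx => by
  simpa using add_mem_thicken (r := r) hx (d := 0) (by simp)

lemma mem_thicken_of_jumpTerm_ne_zero (hrange : ∀ k : ℤ, (r : ℤ) < |k| → p k = 0)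
    (hf : DependsOn f (s : Set ℤ)) {η : Config} {q : ℤ × ℤ} (hq : jumpTerm p f η q ≠ 0) :
    q.1 ∈ thicken r s ∧ q.2 ∈ thicken r s := by
  have hd : |q.2 - q.1| ≤ r := not_lt.1 fun h => hq (by simp [jumpTerm, hrange _ h])
  have hs : q.1 ∈ s ∨ q.2 ∈ s := by
    by_contra! hout
    refine hq ?_
    rw [jumpTerm, hf fun x hx => ?_, sub_self, mul_zero]
    have h1 : x ≠ q.1 := fun h => hout.1 (h ▸ hx)
    have h2 : x ≠ q.2 := fun h => hout.2 (h ▸ hx)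
    simp [swapConf, h1, h2]
  rcases hs with h | h
  · refine ⟨subset_thicken h, ?_⟩
    simpa using add_mem_thicken h hd
  · refine ⟨?_, subset_thicken h⟩
    simpa using add_mem_thicken h ((abs_sub_comm _ _).trans_le hd)

lemma gen0_eq_sum_thicken (hrange : ∀ k : ℤ, (r : ℤ) < |k| → p k = 0)
    (hf : DependsOn f (s : Set ℤ)) (η : Config) :
    gen0 p f η = ∑ q ∈ thicken r s ×ˢ thicken r s, jumpTerm p f η q :=
  tsum_eq_sum fun q hq => by
    by_contra hne
    exact hq (Finset.mem_product.2 (mem_thicken_of_jumpTerm_ne_zero hrange hf hne))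

lemma jumpTerm_congr (hf : DependsOn f (s : Set ℤ)) {t : Finset ℤ} (hst : s ⊆ t)
    {η ζ : Config} (hηζ : ∀ x ∈ t, η x = ζ x) {q : ℤ × ℤ} (hq : q.1 ∈ t ∧ q.2 ∈ t) :
    jumpTerm p f η q = jumpTerm p f ζ q := by
  have hswap : f (swapConf η q.1 q.2) = f (swapConf ζ q.1 q.2) := hf fun x hx => by
    simp only [swapConf]
    split_ifs
    exacts [hηζ _ hq.2, hηζ _ hq.1, hηζ _ (hst hx)]
  simp only [jumpTerm, val, hηζ _ hq.1, hηζ _ hq.2, hswap, hf fun x hx => hηζ x (hst hx)]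

lemma dependsOn_gen0 (hrange : ∀ k : ℤ, (r : ℤ) < |k| → p k = 0)
    (hf : DependsOn f (s : Set ℤ)) : DependsOn (gen0 p f) (thicken r s : Set ℤ) :=
  fun η ζ hηζ => by
    rw [gen0_eq_sum_thicken hrange hf, gen0_eq_sum_thicken hrange hf]
    exact Finset.sum_congr rfl fun q hq =>
      jumpTerm_congr hf subset_thicken hηζ (Finset.mem_product.1 hq)

lemma jumpTerm_comp_transl (i : ℤ) (η : Config) (q : ℤ × ℤ) :
    jumpTerm p (f ∘ transl i) η (q.1 + i, q.2 + i) = jumpTerm p f (transl i η) q := by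
  simp only [jumpTerm, Function.comp, transl_swapConf, add_sub_add_right_eq_sub]
  rfl

/-- In the frame of `f` the blocked site sits at `-i`; when no jump that can change `f` touches
it, the blockage is invisible. -/
lemma gen_comp_transl (hrange : ∀ k : ℤ, (r : ℤ) < |k| → p k = 0)
    (hf : DependsOn f (s : Set ℤ)) {i : ℤ} (hi : -i ∉ thicken r s) (η : Config) :
    gen p (f ∘ transl i) η = gen0 p f (transl i η) := by
  rw [gen, gen0, ← (Equiv.prodCongr (Equiv.addRight i) (Equiv.addRight i)).tsum_eq]
  refine tsum_congr fun q => ?_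
  simp only [Equiv.prodCongr_apply, Equiv.coe_addRight, Prod.map_fst, Prod.map_snd]
  change (if _ then jumpTerm p (f ∘ transl i) η (q.1 + i, q.2 + i) else 0) = _
  rw [jumpTerm_comp_transl]
  split_ifs with hq
  · rfl
  · by_contra hne
    have hmem := mem_thicken_of_jumpTerm_ne_zero hrange hf (Ne.symm hne)
    obtain h | h : -i = q.1 ∨ -i = q.2 := by omega
    exacts [hi (h ▸ hmem.1), hi (h ▸ hmem.2)]

end Generator

theorem integral_gen0_eq_zero_of_isCesaroLimit {p : ℤ → ℝ} {r : ℕ}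
    (hrange : ∀ k : ℤ, (r : ℤ) < |k| → p k = 0) {ν ν' : Measure Config}
    (hinv : IsInvariantMeasure p ν) (hces : IsCesaroLimit ν ν') {f : Config → ℝ}
    (hf : IsLocal f) : ∫ η, gen0 p f η ∂ν' = 0 := by
  obtain ⟨s, hs⟩ := isLocal_iff_exists_dependsOn.1 hf
  obtain ⟨n, hn, hconv⟩ := hces
  have hcont : Continuous (gen0 p f) :=
    (isLocal_iff_exists_dependsOn.2 ⟨_, dependsOn_gen0 hrange hs⟩).continuous
  obtain ⟨M, hM⟩ := (thicken r s).bddBelow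
  have hzero : ∀ i ≥ M.natAbs + 1, ∫ η, gen0 p f η ∂(translMeasure i ν) = 0 := by
    intro i hi
    have hfar : -(i : ℤ) ∉ thicken r s := fun h => by have := hM h; omega
    rw [integral_translMeasure _ _ hcont]
    simp_rw [← gen_comp_transl hrange hs hfar]
    exact hinv _ (isLocal_iff_exists_dependsOn.2 ⟨_, hs.comp_transl i⟩)
  exact tendsto_nhds_unique (hconv _ hcont)
    ((tendsto_atTop_of_eventually_const hzero).cesaroMean.comp hn)

theorem cesaro_limit_translation_invariant_and_L0_invariant_general
    (R : ℤ) (p : ℤ → ℝ)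
    (hrange : ∀ k : ℤ, R < |k| → p k = 0)
    (ν νstar : Measure Config) (hν : IsProbabilityMeasure ν)
    (hνs : IsProbabilityMeasure νstar)
    (hinv : IsInvariantMeasure p ν) (hces : IsCesaroLimit ν νstar) :
    translMeasure 1 νstar = νstar ∧
    ∀ f : Config → ℝ, IsLocal f → ∫ η, gen0 p f η ∂νstar = 0 := by
  have hrange' : ∀ k : ℤ, (R.toNat : ℤ) < |k| → p k = 0 :=
    fun k hk => hrange k ((Int.self_le_toNat R).trans_lt hk)
  exact ⟨translMeasure_one_eq_of_isCesaroLimit hces,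
    fun f hf => integral_gen0_eq_zero_of_isCesaroLimit hrange' hinv hces hf⟩

/-- Any Cesàro weak limit under translation of an invariant measure of the
blocked ASEP is translation invariant and invariant for the translation-invariant
ASEP generator `L₀`. -/
theorem cesaro_limit_translation_invariant_and_L0_invariant
    (R : ℤ) (hR : 1 < R) (p : ℤ → ℝ) (hp : ∀ k, 0 ≤ p k)
    (hrange : ∀ k : ℤ, R < |k| → p k = 0)
    (ν νstar : Measure Config) (hν : IsProbabilityMeasure ν)
    (hνs : IsProbabilityMeasure νstar)
    (hinv : IsInvariantMeasure p ν) (hces : IsCesaroLimit ν νstar) :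
    translMeasure 1 νstar = νstar ∧
    ∀ f : Config → ℝ, IsLocal f → ∫ η, gen0 p f η ∂νstar = 0 :=
  cesaro_limit_translation_invariant_and_L0_invariant_general R p hrange ν νstar hν hνs hinv hces
end

section
/- Let R ≥ 1 be an integer and let q : ℤ → ℝ satisfy q(k) = 0 unless 1 ≤ k ≤ R. For any function a : ℤ → ℝ define G_i = Σ_{j=−(R−1)}^{R−1} ( Σ_{k=|j|+1}^{R} (k − |j|) q(k) ) a(i+j). Then for every integer i, Σ_{x ≤ i < y} q(y−x) (a(y) − a(x)) = G_{i+1} − G_i, where the sum on the left ranges over pairs of integers x ≤ i < y (it is finite since q vanishes outside {1,…,R}). -/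
/-!
Both sides are linear in `q`, so it suffices to treat a single jump length `k`. The pairs
straddling the bond `(i, i + 1)` with `y - x = k` are `x ∈ (i - k, i]`, and `G` is the
`q`-weighted sum of the tent sums `T_k(i) = ∑_{|j| < k} (k - |j|) a(i + j)`. Shifting `i` by one
changes the tent weight at offset `j` by `|j| - |j - 1|`, which is `+1` on `[1, k]` and `-1` on
`[1 - k, 0]`; this is exactly `∑_{x ∈ (i - k, i]} (a(x + k) - a x)`.
-/

open Finset

theorem sum_Icc_eq_sum_Icc_add {M : Type*} [AddCommMonoid M] (f : ℤ → M) {lo hi lo' hi' : ℤ}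
    (c : ℤ) (hlo : lo' + c = lo) (hhi : hi' + c = hi) :
    ∑ j ∈ Icc lo hi, f j = ∑ j ∈ Icc lo' hi', f (j + c) := by
  subst hlo hhi
  rw [← map_add_right_Icc, sum_map]
  rfl

noncomputable def tentSum (k : ℤ) (a : ℤ → ℝ) (i : ℤ) : ℝ :=
  ∑ j ∈ Icc (-(k - 1)) (k - 1), ((k - |j| : ℤ) : ℝ) * a (i + j)

theorem tentSum_eq_sum_Icc (k : ℤ) (a : ℤ → ℝ) (i : ℤ) :
    tentSum k a i = ∑ j ∈ Icc (1 - k) k, ((k - |j| : ℤ) : ℝ) * a (i + j) := by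
  refine sum_subset (Icc_subset_Icc (by omega) (by omega)) fun j hj hj' => ?_
  have hjk : j = k := by simp only [mem_Icc] at hj hj'; omega
  simp [hjk, abs_of_pos (show 0 < k by simp only [mem_Icc] at hj; omega)]

theorem tentSum_add_one_eq_sum_Icc (k : ℤ) (a : ℤ → ℝ) (i : ℤ) :
    tentSum k a (i + 1) = ∑ j ∈ Icc (1 - k) k, ((k - |j - 1| : ℤ) : ℝ) * a (i + j) := by
  have hshift : tentSum k a (i + 1)
      = ∑ j ∈ Icc (-(k - 1) + 1) (k - 1 + 1), ((k - |j - 1| : ℤ) : ℝ) * a (i + j) := by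
    rw [tentSum, sum_Icc_eq_sum_Icc_add _ 1 rfl rfl]
    simp only [add_sub_cancel_right, add_right_comm i 1, add_assoc]
  rw [hshift]
  refine sum_subset (Icc_subset_Icc (by omega) (by omega)) fun j hj hj' => ?_
  have hjk : j = 1 - k := by simp only [mem_Icc] at hj hj'; omega
  simp [hjk, abs_of_pos (show 0 < k by simp only [mem_Icc] at hj; omega)]

theorem sum_Icc_abs_sub_abs_sub_one_mul (k : ℤ) (a : ℤ → ℝ) (i : ℤ) :
    ∑ j ∈ Icc (1 - k) k, ((|j| - |j - 1| : ℤ) : ℝ) * a (i + j)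
      = ∑ x ∈ Icc (i - k + 1) i, (a (x + k) - a x) := by
  have hsplit : Icc (1 - k) k = Icc (1 - k) 0 ∪ Icc 1 k := by
    ext; simp only [mem_union, mem_Icc]; omega
  have hdisj : Disjoint (Icc (1 - k) 0) (Icc 1 k) := disjoint_left.2 fun j h h' => by
    simp only [mem_Icc] at h h'; omega
  have hneg : ∀ j ∈ Icc (1 - k) 0, ((|j| - |j - 1| : ℤ) : ℝ) * a (i + j) = -a (i + j) := by
    intro j hj
    simp only [mem_Icc] at hj
    rw [abs_of_nonpos hj.2, abs_of_neg (by omega : j - 1 < 0)]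
    push_cast; ring
  have hpos : ∀ j ∈ Icc 1 k, ((|j| - |j - 1| : ℤ) : ℝ) * a (i + j) = a (i + j) := by
    intro j hj
    simp only [mem_Icc] at hj
    rw [abs_of_pos (by omega : 0 < j), abs_of_nonneg (by omega : 0 ≤ j - 1)]
    push_cast; ring
  have hup : ∑ j ∈ Icc 1 k, a (i + j) = ∑ x ∈ Icc (i - k + 1) i, a (x + k) := by
    rw [sum_Icc_eq_sum_Icc_add _ (lo' := i - k + 1) (hi' := i) (k - i) (by ring) (by ring)]
    exact sum_congr rfl fun x _ => by ring_nf
  have hdown : ∑ x ∈ Icc (i - k + 1) i, a x = ∑ j ∈ Icc (1 - k) 0, a (i + j) := by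
    rw [sum_Icc_eq_sum_Icc_add _ (lo' := 1 - k) (hi' := 0) i (by ring) (by ring)]
    exact sum_congr rfl fun x _ => by rw [add_comm]
  rw [hsplit, sum_union hdisj, sum_sub_distrib, sum_congr rfl hneg, sum_congr rfl hpos,
    sum_neg_distrib, hup, hdown]
  ring

theorem tentSum_add_one_sub (k : ℤ) (a : ℤ → ℝ) (i : ℤ) :
    tentSum k a (i + 1) - tentSum k a i = ∑ x ∈ Icc (i - k + 1) i, (a (x + k) - a x) := by
  rw [tentSum_add_one_eq_sum_Icc, tentSum_eq_sum_Icc, ← sum_sub_distrib,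
    ← sum_Icc_abs_sub_abs_sub_one_mul]
  refine sum_congr rfl fun j _ => ?_
  push_cast; ring

theorem sum_Icc_tailWeight_mul_eq_sum_mul_tentSum (R : ℤ) (q a : ℤ → ℝ) (i : ℤ) :
    ∑ j ∈ Icc (-(R - 1)) (R - 1),
        (∑ k ∈ Icc (|j| + 1) R, ((k - |j| : ℤ) : ℝ) * q k) * a (i + j)
      = ∑ k ∈ Icc 1 R, q k * tentSum k a i := by
  simp_rw [sum_mul]
  rw [sum_comm' (t' := Icc 1 R) (s' := fun k => Icc (-(k - 1)) (k - 1))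
    fun j k => by simp only [mem_Icc]; grind]
  simp_rw [tentSum, mul_sum]
  exact sum_congr rfl fun k _ => sum_congr rfl fun j _ => by ring

theorem tsum_straddling_eq_sum_Icc (R : ℤ) (q a : ℤ → ℝ)
    (hq : ∀ k : ℤ, ¬(1 ≤ k ∧ k ≤ R) → q k = 0) (i : ℤ) :
    (∑' xy : ℤ × ℤ,
        if xy.1 ≤ i ∧ i < xy.2 then q (xy.2 - xy.1) * (a xy.2 - a xy.1) else 0)
      = ∑ k ∈ Icc 1 R, q k * ∑ x ∈ Icc (i - k + 1) i, (a (x + k) - a x) := by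
  rw [← (Equiv.prodShear (Equiv.refl ℤ) Equiv.addLeft).tsum_eq]
  simp only [Equiv.prodShear_apply, Equiv.refl_apply, Equiv.coe_addLeft, add_sub_cancel_left]
  rw [tsum_eq_sum (s := Icc (i - R + 1) i ×ˢ Icc 1 R), sum_product_right]
  · refine sum_congr rfl fun k hk => ?_
    rw [mul_sum, ← sum_filter]
    congr 1
    ext x
    simp only [mem_filter, mem_Icc] at hk ⊢
    omega
  · rintro ⟨x, k⟩ hxk
    simp only [mem_product, mem_Icc] at hxk
    split_ifs with h
    · rw [hq k (by omega), zero_mul]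
    · rfl

theorem current_telescoping_general
    (R : ℤ) (q : ℤ → ℝ)
    (hq : ∀ k : ℤ, ¬(1 ≤ k ∧ k ≤ R) → q k = 0)
    (a : ℤ → ℝ) (G : ℤ → ℝ)
    (hG : ∀ i : ℤ, G i = ∑ j ∈ Finset.Icc (-(R - 1)) (R - 1),
      (∑ k ∈ Finset.Icc (|j| + 1) R, ((k - |j| : ℤ) : ℝ) * q k) * a (i + j))
    (i : ℤ) :
    (∑' xy : ℤ × ℤ,
        if xy.1 ≤ i ∧ i < xy.2 then q (xy.2 - xy.1) * (a xy.2 - a xy.1) else 0)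
      = G (i + 1) - G i := by
  rw [tsum_straddling_eq_sum_Icc R q a hq i, hG, hG,
    sum_Icc_tailWeight_mul_eq_sum_mul_tentSum, sum_Icc_tailWeight_mul_eq_sum_mul_tentSum,
    ← sum_sub_distrib]
  exact sum_congr rfl fun k _ => by rw [← mul_sub, tentSum_add_one_sub]

/-- Telescoping identity: for jump rates `q` supported in `{1,…,R}` and any
function `a : ℤ → ℝ`, setting
`G_i = Σ_{j=-(R-1)}^{R-1} (Σ_{k=|j|+1}^{R} (k-|j|) q(k)) a(i+j)`,
one has `Σ_{x ≤ i < y} q(y-x) (a(y) - a(x)) = G_{i+1} - G_i`. -/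
theorem current_telescoping
    (R : ℤ) (hR : 1 ≤ R) (q : ℤ → ℝ)
    (hq : ∀ k : ℤ, ¬(1 ≤ k ∧ k ≤ R) → q k = 0)
    (a : ℤ → ℝ) (G : ℤ → ℝ)
    (hG : ∀ i : ℤ, G i = ∑ j ∈ Finset.Icc (-(R - 1)) (R - 1),
      (∑ k ∈ Finset.Icc (|j| + 1) R, ((k - |j| : ℤ) : ℝ) * q k) * a (i + j))
    (i : ℤ) :
    (∑' xy : ℤ × ℤ,
        if xy.1 ≤ i ∧ i < xy.2 then q (xy.2 - xy.1) * (a xy.2 - a xy.1) else 0)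
      = G (i + 1) - G i :=
  current_telescoping_general R q hq a G hG i
end

section
/- Let X and Y be particle configurations (strictly increasing functions ℤ → ℤ) with X ≥ Y pointwise. Let i ∈ ℤ and let z > 0 be an integer such that Y_i + z is not in the range of Y. Then there exists an integer z' ≥ 0 such that (a) either z' = 0, or X_i + z' is not in the range of X and X_i + z' ≤ Y_i + z, and (b) T_{i,z'} X ≥ T_{i,z} Y pointwise. -/
/-- The index `I = max {k : X_k < X_i + z}` of the right-most particle to the
left of the target site `X_i + z`. -/
noncomputable def jumpIndex (X : ℤ → ℤ) (i z : ℤ) : ℤ :=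
  sSup {k : ℤ | X k < X i + z}

/-- The jump-and-relabel map `T_{i,z}`: the `i`-th particle jumps to the site
`X_i + z` and the particles are relabelled so as to stay ordered; by convention
`T_{i,0} X = X`. -/
noncomputable def jumpRelabel (X : ℤ → ℤ) (i z : ℤ) : ℤ → ℤ :=
  if z = 0 then X
  else fun j =>
    if j < i ∨ jumpIndex X i z < j then X j
    else if j < jumpIndex X i z then X (j + 1)
    else X i + z

/-!
The `i`-th `X`-particle jumps to `t`, the last site of `(X_i, Y_i + z]` that `X` leaves vacant
(it stays put if there is none). Then every site of `(t, Y_i + z]` is occupied by `X`, and since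
`Y_i + z` is vacant for `Y`, downward induction from the top of this block shows that each
`X`-particle in it lies strictly to the right of its `Y`-partner. This slack is exactly what absorbs
the left shift of the `Y`-labels between `i` and the jump index of `Y`.
-/

section StrictMonoInt

variable {X : ℤ → ℤ}

theorem StrictMono.apply_add_sub_le (hX : StrictMono X) {a b : ℤ} (hab : a ≤ b) :
    X a + (b - a) ≤ X b := by
  induction b, hab using Int.leInduction with
  | base => simp
  | succ n _ ih => have := hX (lt_add_one n); omega

theorem StrictMono.bddAbove_setOf_apply_lt (hX : StrictMono X) (c : ℤ) :
    BddAbove {k | X k < c} := by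
  refine ⟨max 0 (c - X 0), fun k (hk : X k < c) => ?_⟩
  rcases le_total k 0 with hk0 | hk0
  · omega
  · have := hX.apply_add_sub_le hk0; omega

theorem StrictMono.nonempty_setOf_apply_lt (hX : StrictMono X) (c : ℤ) :
    {k | X k < c}.Nonempty := by
  have := hX.apply_add_sub_le (min_le_left 0 (c - X 0 - 1))
  exact ⟨min 0 (c - X 0 - 1), show X _ < c by omega⟩

theorem StrictMono.apply_add_one_eq (hX : StrictMono X) {k s : ℤ} (hk : X k ≤ s)
    (hs : s < X (k + 1)) (hocc : s + 1 ∈ Set.range X) : X (k + 1) = s + 1 := by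
  obtain ⟨m, hm⟩ := hocc
  have hkm : k < m := hX.lt_iff_lt.1 (by omega)
  have := hX.monotone (show k + 1 ≤ m by omega)
  omega

end StrictMonoInt

section JumpRelabel

variable {X Y : ℤ → ℤ} {i z j : ℤ}

theorem lt_iff_le_jumpIndex (hX : StrictMono X) {k : ℤ} :
    X k < X i + z ↔ k ≤ jumpIndex X i z := by
  have hbdd := hX.bddAbove_setOf_apply_lt (X i + z)
  refine ⟨fun hk => le_csSup hbdd hk, fun hk => ?_⟩
  exact (hX.monotone hk).trans_lt (Int.csSup_mem (hX.nonempty_setOf_apply_lt _) hbdd)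

theorem apply_jumpIndex_lt (hX : StrictMono X) : X (jumpIndex X i z) < X i + z :=
  (lt_iff_le_jumpIndex hX).2 le_rfl

theorem jumpIndex_lt_of_nonpos (hX : StrictMono X) (hz : z ≤ 0) : jumpIndex X i z < i :=
  not_le.1 fun h => by have := (lt_iff_le_jumpIndex hX).2 h; omega

theorem jumpIndex_le_jumpIndex (hX : StrictMono X) (hY : StrictMono Y) (hXY : ∀ k, Y k ≤ X k)
    {z' : ℤ} (h : X i + z' ≤ Y i + z) : jumpIndex X i z' ≤ jumpIndex Y i z := by
  have := apply_jumpIndex_lt hX (i := i) (z := z')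
  exact (lt_iff_le_jumpIndex hY).1 (by have := hXY (jumpIndex X i z'); omega)

theorem lt_apply_jumpIndex_add_one (hX : StrictMono X) (h : X i + z ∉ Set.range X) :
    X i + z < X (jumpIndex X i z + 1) := by
  refine (not_lt.1 fun hlt => ?_).lt_of_ne fun heq => h ⟨_, heq.symm⟩
  have := (lt_iff_le_jumpIndex hX).1 hlt
  omega

theorem jumpRelabel_of_lt_or_lt (h : j < i ∨ jumpIndex X i z < j) :
    jumpRelabel X i z j = X j := by
  unfold jumpRelabel
  split_ifs
  · rfl
  · exact if_pos h

theorem jumpRelabel_of_le_of_lt (hX : StrictMono X) (hij : i ≤ j) (hj : j < jumpIndex X i z) :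
    jumpRelabel X i z j = X (j + 1) := by
  have hz : z ≠ 0 := by
    have := (lt_iff_le_jumpIndex hX).2 (hij.trans hj.le); omega
  simp [jumpRelabel, hz, hj, hij.not_gt, hj.not_gt]

theorem jumpRelabel_of_eq_jumpIndex (hX : StrictMono X) (hij : i ≤ j) (hj : j = jumpIndex X i z) :
    jumpRelabel X i z j = X i + z := by
  subst hj
  have hz : z ≠ 0 := by
    have := (lt_iff_le_jumpIndex hX).2 hij; omega
  simp [jumpRelabel, hz, hij.not_gt]

theorem jumpRelabel_eq_min (hX : StrictMono X) (h : X i + z ∉ Set.range X) (hij : i ≤ j)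
    (hj : j ≤ jumpIndex X i z) : jumpRelabel X i z j = min (X (j + 1)) (X i + z) := by
  rcases hj.lt_or_eq with hj | hj
  · have := (lt_iff_le_jumpIndex hX).2 (show j + 1 ≤ jumpIndex X i z by omega)
    rw [jumpRelabel_of_le_of_lt hX hij hj]
    omega
  · have := lt_apply_jumpIndex_add_one hX h
    rw [jumpRelabel_of_eq_jumpIndex hX hij hj, ← hj] at *
    omega

end JumpRelabel

theorem Int.exists_le_Ioc_subset (S : Set ℤ) (a b : ℤ) :
    ∃ t, a ≤ t ∧ Set.Ioc t b ⊆ S ∧ (t = a ∨ (t ∉ S ∧ t ≤ b)) := by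
  rcases lt_or_ge b a with hba | hab
  · exact ⟨a, le_rfl, by simp [Set.Ioc_eq_empty_of_le hba.le], Or.inl rfl⟩
  induction b, hab using Int.leInduction with
  | base => exact ⟨a, le_rfl, by simp, Or.inl rfl⟩
  | succ n _ ih =>
    by_cases hn : n + 1 ∈ S
    · obtain ⟨t, hat, hocc, hvac⟩ := ih
      refine ⟨t, hat, fun s ⟨hts, hs⟩ => ?_, hvac.imp_right fun h => ⟨h.1, by omega⟩⟩
      rcases hs.lt_or_eq with hs | rfl
      · exact hocc ⟨hts, by omega⟩
      · exact hn
    · exact ⟨n + 1, by omega, by simp, Or.inr ⟨hn, le_rfl⟩⟩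

section Occupied

variable {X Y : ℤ → ℤ} {t b : ℤ} (hX : StrictMono X) (hY : StrictMono Y)
  (hXY : ∀ k, Y k ≤ X k) (hocc : Set.Ioc t b ⊆ Set.range X) (hb : b ∉ Set.range Y)
include hX hY hXY hocc hb

theorem apply_lt_of_mem_Ioc {k : ℤ} (hk : X k ∈ Set.Ioc t b) : Y k < X k := by
  obtain ⟨n, hn⟩ : ∃ n : ℕ, X k + n = b := ⟨(b - X k).toNat, by have := hk.2; omega⟩
  induction n generalizing k with
  | zero => exact (hXY k).lt_of_ne fun h => hb ⟨k, by omega⟩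
  | succ n ih =>
    obtain ⟨htk, hkb⟩ := hk
    have hnext : X (k + 1) = X k + 1 :=
      hX.apply_add_one_eq le_rfl (hX (lt_add_one k)) (hocc ⟨by omega, by omega⟩)
    have := ih (k := k + 1) ⟨by omega, by omega⟩ (by omega)
    have := hY (lt_add_one k)
    omega

theorem min_apply_add_one_le {k s : ℤ} (hts : t ≤ s) (hk : X k ≤ s) (hs : s < X (k + 1)) :
    min (Y (k + 1)) b ≤ s := by
  by_cases hbs : b ≤ s
  · exact min_le_of_right_le hbs
  have hnext : X (k + 1) = s + 1 := hX.apply_add_one_eq hk hs (hocc ⟨by omega, by omega⟩)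
  have := apply_lt_of_mem_Ioc hX hY hXY hocc hb (k := k + 1) ⟨by omega, by omega⟩
  exact min_le_of_left_le (by omega)

end Occupied

theorem jumpRelabel_le_of_Ioc_subset {X Y : ℤ → ℤ} (hX : StrictMono X) (hY : StrictMono Y)
    (hXY : ∀ k, Y k ≤ X k) {i z z' : ℤ} (hz : 0 < z) (hb : Y i + z ∉ Set.range Y)
    (hocc : Set.Ioc (X i + z') (Y i + z) ⊆ Set.range X)
    (hvac : z' = 0 ∨ (X i + z' ∉ Set.range X ∧ X i + z' ≤ Y i + z)) (j : ℤ) :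
    jumpRelabel Y i z j ≤ jumpRelabel X i z' j := by
  have hiK : i ≤ jumpIndex Y i z := (lt_iff_le_jumpIndex hY).1 (by omega)
  have hJK : jumpIndex X i z' ≤ jumpIndex Y i z := by
    rcases hvac with rfl | ⟨-, hle⟩
    · exact ((jumpIndex_lt_of_nonpos hX le_rfl).trans_le hiK).le
    · exact jumpIndex_le_jumpIndex hX hY hXY hle
  have hmin (k s : ℤ) := min_apply_add_one_le hX hY hXY hocc hb (k := k) (s := s)
  rcases lt_or_ge j i with hji | hij
  · rw [jumpRelabel_of_lt_or_lt (Or.inl hji), jumpRelabel_of_lt_or_lt (Or.inl hji)]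
    exact hXY j
  rcases lt_or_ge (jumpIndex Y i z) j with hKj | hjK
  · rw [jumpRelabel_of_lt_or_lt (Or.inr hKj), jumpRelabel_of_lt_or_lt (Or.inr (hJK.trans_lt hKj))]
    exact hXY j
  rw [jumpRelabel_eq_min hY hb hij hjK]
  rcases lt_trichotomy j (jumpIndex X i z') with hjJ | rfl | hJj
  · rw [jumpRelabel_of_le_of_lt hX hij hjJ]
    exact min_le_of_left_le (hXY _)
  · have hvacX : X i + z' ∉ Set.range X := by
      rcases hvac with rfl | ⟨h, -⟩
      · exact absurd hij (jumpIndex_lt_of_nonpos hX le_rfl).not_ge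
      · exact h
    rw [jumpRelabel_of_eq_jumpIndex hX hij rfl]
    exact hmin _ _ le_rfl (apply_jumpIndex_lt hX).le (lt_apply_jumpIndex_add_one hX hvacX)
  · rw [jumpRelabel_of_lt_or_lt (Or.inr hJj)]
    exact hmin _ _ (not_lt.1 ((lt_iff_le_jumpIndex hX).not.2 hJj.not_ge)) le_rfl
      (hX (lt_add_one j))

/-- Given ordered particle configurations `X ≥ Y` and a jump of the `i`-th
`Y`-particle by `z > 0` to an empty site, there is a jump size `z' ≥ 0` for the
`i`-th `X`-particle (either `z' = 0`, or the target `X_i + z'` is empty and lies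
at most at `Y_i + z`) such that the order `T_{i,z'} X ≥ T_{i,z} Y` is
preserved. -/
theorem coupling_preserves_order
    (X Y : ℤ → ℤ) (hX : StrictMono X) (hY : StrictMono Y)
    (hXY : ∀ k, Y k ≤ X k) (i z : ℤ) (hz : 0 < z)
    (hempty : Y i + z ∉ Set.range Y) :
    ∃ z' : ℤ, 0 ≤ z' ∧
      (z' = 0 ∨ (X i + z' ∉ Set.range X ∧ X i + z' ≤ Y i + z)) ∧
      ∀ j, jumpRelabel Y i z j ≤ jumpRelabel X i z' j := by
  obtain ⟨t, ht, hocc, hvac⟩ := Int.exists_le_Ioc_subset (Set.range X) (X i) (Y i + z)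
  obtain ⟨z', rfl⟩ : ∃ z', t = X i + z' := ⟨t - X i, by ring⟩
  have hvac' := hvac.imp_left fun h => show z' = 0 by omega
  exact ⟨z', by omega, hvac', jumpRelabel_le_of_Ioc_subset hX hY hXY hz hempty hocc hvac'⟩
end
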